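/- Under the eigengap condition θ_j − θ_{j+1} ≥ c j^{−α−1} (α > 1, sequence summable in squares: Σ θ_k² < ∞) and coefficient decay |b_j| ≤ C j^{−τ} with τ ≥ α + 1/2, the quantity sup_{j≥1} (θ_j² j^{2α})^{−1} Σ_{k≠j} θ_k² b_k² (θ_j − θ_k)^{−2} is finite. -/
import Mathlib

lemma sq_rpow' (x : ℝ) (hx : 0 ≤ x) (a : ℝ) : (x ^ a)^2 = x ^ (2*a) := by
  rw [← Real.rpow_natCast (x ^ a) 2, ← Real.rpow_mul hx]
  norm_num [mul_comm]

lemma theta_mono (θ : ℕ → ℝ) (hstrict : ∀ j : ℕ, 1 ≤ j → θ (j + 1) < θ j)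
    (m : ℕ) (hm : 1 ≤ m) : ∀ n, m ≤ n → θ n ≤ θ m := by
  intro n hn
  induction n, hn using Nat.le_induction with
  | base => exact le_refl _
  | succ n hmn ih => exact le_trans (hstrict n (hm.trans hmn)).le ih

lemma theta_gap (θ : ℕ → ℝ) (c α : ℝ) (hα : 0 < α)
    (hgap : ∀ j : ℕ, 1 ≤ j → c * (j : ℝ) ^ (-α - 1) ≤ θ j - θ (j + 1))
    (hc : 0 < c) (m : ℕ) (hm : 1 ≤ m) :
    ∀ n, m ≤ n → c * ((n:ℝ) - m) * (n:ℝ)^(-α-1) ≤ θ m - θ n := by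
  intro n hn
  induction n, hn using Nat.le_induction with
  | base => simp
  | succ n hmn ih =>
    have hn1 : 1 ≤ n := hm.trans hmn
    have hn0 : (0:ℝ) < n := by exact_mod_cast hn1
    have h1 : c * (n:ℝ)^(-α-1) ≤ θ n - θ (n + 1) := hgap n hn1
    have hrp : ((n:ℝ)+1)^(-α-1) ≤ (n:ℝ)^(-α-1) := by
      apply Real.rpow_le_rpow_of_nonpos hn0 (by linarith) (by linarith)
    have hnm : (m:ℝ) ≤ n := by exact_mod_cast hmn
    have hrpn : 0 ≤ ((n:ℝ)+1)^(-α-1) := Real.rpow_nonneg (by linarith) _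
    push_cast
    nlinarith [mul_le_mul_of_nonneg_left hrp (by nlinarith : (0:ℝ) ≤ c * ((n:ℝ) - m))]

lemma inv_sq_le (x G : ℝ) (hG : 0 < G) (h : G ≤ x ∨ G ≤ -x) : (x^2)⁻¹ ≤ (G^2)⁻¹ := by
  apply inv_anti₀ (by positivity)
  rcases h with h | h <;> nlinarith

lemma theta_sq_bd (θ : ℕ → ℝ) (hpos : ∀ j : ℕ, 1 ≤ j → 0 < θ j)
    (hstrict : ∀ j : ℕ, 1 ≤ j → θ (j + 1) < θ j)
    (hsq : Summable fun k => (θ k) ^ 2) (k : ℕ) (hk : 1 ≤ k) :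
    (k:ℝ) * θ k ^ 2 ≤ ∑' i : ℕ, (θ i)^2 := by
  have h1 : ∑ i ∈ Finset.Icc 1 k, θ k ^ 2 ≤ ∑ i ∈ Finset.Icc 1 k, θ i ^ 2 := by
    apply Finset.sum_le_sum
    intro i hi
    obtain ⟨hi1, hik⟩ := Finset.mem_Icc.mp hi
    have := theta_mono θ hstrict i hi1 k hik
    nlinarith [hpos i hi1, hpos k hk]
  have h2 : ∑ i ∈ Finset.Icc 1 k, θ i ^ 2 ≤ ∑' i : ℕ, (θ i)^2 :=
    Summable.sum_le_tsum _ (fun i _ => sq_nonneg _) hsq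
  have h3 : ∑ i ∈ Finset.Icc 1 k, θ k ^ 2 = (k:ℝ) * θ k ^ 2 := by
    rw [Finset.sum_const, Nat.card_Icc]
    simp [nsmul_eq_mul]
  linarith

lemma isq_partial (N : ℕ) : ∑ n ∈ Finset.range N, (((n:ℝ)+1)^2)⁻¹ ≤ 2 - 2/((N:ℝ)+1) := by
  induction N with
  | zero => norm_num
  | succ N ih =>
    rw [Finset.sum_range_succ]
    have h1 : (0:ℝ) < (N:ℝ)+1 := by positivity
    have h2 : (0:ℝ) < (N:ℝ)+2 := by positivity
    have key : (((N:ℝ)+1)^2)⁻¹ ≤ 2/((N:ℝ)+1) - 2/((N:ℝ)+2) := by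
      rw [div_sub_div _ _ h1.ne' h2.ne', le_div_iff₀ (by positivity), inv_mul_eq_div,
        div_le_iff₀ (by positivity)]
      ring_nf
      nlinarith
    have h3 : 2 / ((N:ℝ) + 1 + 1) = 2/((N:ℝ)+2) := by
      rw [show (N:ℝ)+1+1 = (N:ℝ)+2 from by ring]
    push_cast
    rw [h3]
    linarith

lemma isq_summable : Summable (fun n : ℕ => (((n:ℝ)+1)^2)⁻¹) := by
  have h : Summable (fun n : ℕ => 1/(n:ℝ)^2) :=
    Real.summable_one_div_nat_pow.mpr (by norm_num)
  exact ((summable_nat_add_iff 1).mpr h).congr (fun n => by push_cast; rw [one_div])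

lemma isq_tsum : ∑' n : ℕ, (((n:ℝ)+1)^2)⁻¹ ≤ 2 := by
  apply Real.tsum_le_of_sum_range_le (fun n => by positivity)
  intro n
  have := isq_partial n
  have h2 : (0:ℝ) ≤ 2/((n:ℝ)+1) := by positivity
  linarith

lemma u_summable (j : ℕ) : Summable (fun k : ℕ => (((j:ℝ) - k)^2)⁻¹) := by
  apply (summable_nat_add_iff (j+1)).mp
  apply isq_summable.congr
  intro n
  congr 1
  push_cast
  ring

lemma u_tsum (j : ℕ) : ∑' k : ℕ, (((j:ℝ) - k)^2)⁻¹ ≤ 4 := by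
  rw [← Summable.sum_add_tsum_nat_add (j+1) (u_summable j)]
  have head : ∑ i ∈ Finset.range (j+1), (((j:ℝ) - i)^2)⁻¹ ≤ 2 := by
    have e1 : ∑ i ∈ Finset.range (j+1), (((j:ℝ) - i)^2)⁻¹
        = ∑ i ∈ Finset.range (j+1), ((((j - i : ℕ)):ℝ)^2)⁻¹ := by
      apply Finset.sum_congr rfl
      intro i hi
      have hij : i ≤ j := Nat.lt_succ_iff.mp (Finset.mem_range.mp hi)
      rw [Nat.cast_sub hij]
    rw [e1]
    have e2 := Finset.sum_range_reflect (fun i => (((i:ℕ):ℝ)^2)⁻¹) (j+1)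
    simp only [Nat.add_sub_cancel] at e2
    rw [show (∑ i ∈ Finset.range (j+1), ((((j - i : ℕ)):ℝ)^2)⁻¹)
        = ∑ i ∈ Finset.range (j+1), (((i:ℕ):ℝ)^2)⁻¹ from e2]
    rw [Finset.sum_range_succ']
    have := isq_partial j
    have h2 : (0:ℝ) ≤ 2/((j:ℝ)+1) := by positivity
    have e3 : ∑ i ∈ Finset.range j, ((((i+1:ℕ)):ℝ)^2)⁻¹
        = ∑ i ∈ Finset.range j, (((i:ℝ)+1)^2)⁻¹ := by
      apply Finset.sum_congr rfl; intro i _; push_cast; ring_nf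
    rw [e3]
    norm_num
    linarith
  have tail : ∑' n : ℕ, (((j:ℝ) - (n + (j+1) : ℕ))^2)⁻¹ ≤ 2 := by
    have e : ∀ n : ℕ, (((j:ℝ) - (n + (j+1) : ℕ))^2)⁻¹ = (((n:ℝ)+1)^2)⁻¹ := by
      intro n; congr 1; push_cast; ring
    rw [tsum_congr e]
    exact isq_tsum
  linarith

set_option maxHeartbeats 1000000 in
lemma key_bound (θ b : ℕ → ℝ) (c C α τ : ℝ) (hc : 0 < c) (hC : 0 < C)
    (hα : 1 < α) (hτ : α + 1 / 2 ≤ τ)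
    (hpos : ∀ j : ℕ, 1 ≤ j → 0 < θ j)
    (hstrict : ∀ j : ℕ, 1 ≤ j → θ (j + 1) < θ j)
    (hgap : ∀ j : ℕ, 1 ≤ j → c * (j : ℝ) ^ (-α - 1) ≤ θ j - θ (j + 1))
    (hθlb : ∀ j : ℕ, 1 ≤ j → (c / α) * (j : ℝ) ^ (-α) ≤ θ j)
    (hb : ∀ j : ℕ, 1 ≤ j → |b j| ≤ C * (j : ℝ) ^ (-τ))
    (T : ℝ) (hT0 : 0 ≤ T) (hT : ∀ k : ℕ, 1 ≤ k → (k:ℝ) * θ k ^ 2 ≤ T)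
    (j k : ℕ) (hj : 1 ≤ j) :
    (if 1 ≤ k ∧ k ≠ j then (θ k)^2 * (b k)^2 * ((θ j - θ k)^2)⁻¹ else 0)
      ≤ (θ j)^2 * (j:ℝ)^(2*α) *
        ( (C^2 * 2^(2*α+2) / c^2) * (α/c)^2 * (θ k)^2
        + ((T * C^2 * 2^(2*α+2) / c^2) * (α/c)^2 + 2*C^2/c^2) * (((j:ℝ) - k)^2)⁻¹
        + (C^2 * 2^(2*α+2) / c^2) * (((k:ℝ))^2)⁻¹ ) := by
  have hα0 : (0:ℝ) < α := by linarith
  have hj0 : (0:ℝ) < j := by exact_mod_cast hj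
  have hθj := hpos j hj
  have h2pow : (0:ℝ) < 2^(2*α+2) := Real.rpow_pos_of_pos two_pos _
  set D := (θ j)^2 * (j:ℝ)^(2*α) with hD
  clear_value D
  have hD0 : 0 < D := by
    rw [hD]
    exact mul_pos (by positivity) (Real.rpow_pos_of_pos hj0 _)
  -- constants nonneg
  have hM1 : 0 ≤ C^2 * 2^(2*α+2) / c^2 := by positivity
  have hM2 : 0 ≤ (T * C^2 * 2^(2*α+2) / c^2) * (α/c)^2 + 2*C^2/c^2 := by
    have h1 : 0 ≤ T * C^2 * 2^(2*α+2) / c^2 :=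
      div_nonneg (mul_nonneg (mul_nonneg hT0 (by positivity)) h2pow.le) (by positivity)
    have h2 : 0 ≤ (2:ℝ)*C^2/c^2 := by positivity
    exact add_nonneg (mul_nonneg h1 (sq_nonneg _)) h2
  -- the key lower bound on D
  have hlb1 : 1 ≤ (α/c)^2 * D := by
    have h1 : (c/α) * (j:ℝ)^(-α) ≤ θ j := hθlb j hj
    have h1p : (0:ℝ) < (c/α) * (j:ℝ)^(-α) := by
      apply mul_pos (by positivity) (Real.rpow_pos_of_pos hj0 _)
    have h2 : ((c/α) * (j:ℝ)^(-α))^2 ≤ θ j ^ 2 := by nlinarith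
    have h3 : ((c/α) * (j:ℝ)^(-α))^2 = (c/α)^2 * (j:ℝ)^(2*(-α)) := by
      rw [mul_pow, sq_rpow' _ hj0.le]
    have h4 : (c/α)^2 * ((j:ℝ)^(2*(-α)) * (j:ℝ)^(2*α)) ≤ θ j^2 * (j:ℝ)^(2*α) := by
      have := mul_le_mul_of_nonneg_right (h3 ▸ h2) (Real.rpow_nonneg hj0.le (2*α))
      nlinarith [this]
    have h5 : (j:ℝ)^(2*(-α)) * (j:ℝ)^(2*α) = 1 := by
      rw [← Real.rpow_add hj0]; norm_num
    rw [h5, mul_one] at h4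
    have e : (α/c)^2 * (c/α)^2 = 1 := by field_simp
    nlinarith [mul_le_mul_of_nonneg_left h4 (sq_nonneg (α/c))]
  -- RHS nonneg
  have hRHS0 : 0 ≤ D * ( (C^2 * 2^(2*α+2) / c^2) * (α/c)^2 * (θ k)^2
        + ((T * C^2 * 2^(2*α+2) / c^2) * (α/c)^2 + 2*C^2/c^2) * (((j:ℝ) - k)^2)⁻¹
        + (C^2 * 2^(2*α+2) / c^2) * (((k:ℝ))^2)⁻¹ ) := by
    apply mul_nonneg hD0.le
    have i1 : 0 ≤ (((j:ℝ) - k)^2)⁻¹ := by positivity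
    have i2 : 0 ≤ (((k:ℝ))^2)⁻¹ := by positivity
    have i3 : 0 ≤ (C^2 * 2^(2*α+2) / c^2) * (α/c)^2 * (θ k)^2 := by positivity
    exact add_nonneg (add_nonneg i3 (mul_nonneg hM2 i1)) (mul_nonneg hM1 i2)
  split_ifs with hcond
  case neg => exact hRHS0
  obtain ⟨hk, hkj⟩ := hcond
  have hk0 : (0:ℝ) < k := by exact_mod_cast hk
  have hk1 : (1:ℝ) ≤ k := by exact_mod_cast hk
  have hθk := hpos k hk
  -- bound on b k ^ 2
  have hbk : (b k)^2 ≤ C^2 * (k:ℝ)^(2*(-τ)) := by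
    have h1 := hb k hk
    have h2 : (b k)^2 ≤ (C * (k:ℝ)^(-τ))^2 := by
      rw [← sq_abs (b k)]
      apply pow_le_pow_left₀ (abs_nonneg _) h1
    calc (b k)^2 ≤ (C * (k:ℝ)^(-τ))^2 := h2
      _ = C^2 * (k:ℝ)^(2*(-τ)) := by rw [mul_pow, sq_rpow' _ hk0.le]
  -- comparison helper
  have inv_step : ∀ G : ℝ, 0 < G → (G ≤ θ k - θ j ∨ G ≤ θ j - θ k) →
      ((θ j - θ k)^2)⁻¹ ≤ (G^2)⁻¹ := by
    intro G hG hle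
    apply inv_sq_le _ _ hG
    rcases hle with h | h
    · exact Or.inr (by linarith)
    · exact Or.inl h
  have i1 : 0 ≤ (((j:ℝ) - k)^2)⁻¹ := by positivity
  have i2 : 0 ≤ (((k:ℝ))^2)⁻¹ := by positivity
  have hA1nn : 0 ≤ D * ((C^2 * 2^(2*α+2) / c^2) * (α/c)^2 * (θ k)^2) :=
    mul_nonneg hD0.le (by positivity)
  have hA2nn : 0 ≤ D * (((T * C^2 * 2^(2*α+2) / c^2) * (α/c)^2 + 2*C^2/c^2) * (((j:ℝ) - k)^2)⁻¹) :=
    mul_nonneg hD0.le (mul_nonneg hM2 i1)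
  have hA3nn : 0 ≤ D * ((C^2 * 2^(2*α+2) / c^2) * (((k:ℝ))^2)⁻¹) :=
    mul_nonneg hD0.le (mul_nonneg hM1 i2)
  rcases le_or_gt (2*k) j with hA | hAB
  · -- Case A : 2k ≤ j
    have hgapA := theta_gap θ c α hα0 hgap hc k hk (2*k) (by omega)
    have hmonoA := theta_mono θ hstrict (2*k) (by omega) j hA
    have hc2k : ((2*k:ℕ):ℝ) = 2*(k:ℝ) := by push_cast; ring
    rw [hc2k] at hgapA
    have hG0 : (0:ℝ) < c * (k:ℝ) * (2*(k:ℝ))^(-α-1) := by positivity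
    have hG : c * (k:ℝ) * (2*(k:ℝ))^(-α-1) ≤ θ k - θ j := by
      have e : c * (2*(k:ℝ) - k) * (2*(k:ℝ))^(-α-1) = c * (k:ℝ) * (2*(k:ℝ))^(-α-1) := by ring
      rw [e] at hgapA
      linarith [hmonoA]
    have hinv := inv_step _ hG0 (Or.inl hG)
    have hG2 : (c * (k:ℝ) * (2*(k:ℝ))^(-α-1))^2
        = c^2 * 2^(2*(-α-1)) * (k:ℝ)^(((2:ℕ):ℝ) + 2*(-α-1)) := by
      calc (c * (k:ℝ) * (2*(k:ℝ))^(-α-1))^2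
          = c^2 * ((k:ℝ)^(2:ℕ) * ((2*(k:ℝ))^(-α-1))^2) := by ring
        _ = c^2 * ((k:ℝ)^(2:ℕ) * (2*(k:ℝ))^(2*(-α-1))) := by
            rw [sq_rpow' _ (by positivity)]
        _ = c^2 * ((k:ℝ)^(2:ℕ) * ((2:ℝ)^(2*(-α-1)) * (k:ℝ)^(2*(-α-1)))) := by
            rw [Real.mul_rpow (by norm_num) hk0.le]
        _ = c^2 * 2^(2*(-α-1)) * ((k:ℝ)^(((2:ℕ)):ℝ) * (k:ℝ)^(2*(-α-1))) := by
            rw [Real.rpow_natCast]; ring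
        _ = c^2 * 2^(2*(-α-1)) * (k:ℝ)^(((2:ℕ):ℝ) + 2*(-α-1)) := by
            rw [← Real.rpow_add hk0]
    have hGinv : ((c * (k:ℝ) * (2*(k:ℝ))^(-α-1))^2)⁻¹ = (2^(2*α+2)/c^2) * (k:ℝ)^(2*α) := by
      apply inv_eq_of_mul_eq_one_left
      rw [hG2]
      have e2 : (2:ℝ)^(2*α+2) * 2^(2*(-α-1)) = 1 := by
        rw [← Real.rpow_add two_pos, show 2*α+2 + 2*(-α-1) = (0:ℝ) by ring, Real.rpow_zero]
      have e3 : (k:ℝ)^(2*α) * (k:ℝ)^(((2:ℕ):ℝ) + 2*(-α-1)) = 1 := by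
        rw [← Real.rpow_add hk0, show 2*α + (((2:ℕ):ℝ) + 2*(-α-1)) = (0:ℝ) by push_cast; ring,
          Real.rpow_zero]
      calc (2^(2*α+2)/c^2) * (k:ℝ)^(2*α) * (c^2 * 2^(2*(-α-1)) * (k:ℝ)^(((2:ℕ):ℝ) + 2*(-α-1)))
          = ((2:ℝ)^(2*α+2) * 2^(2*(-α-1))) * ((k:ℝ)^(2*α) * (k:ℝ)^(((2:ℕ):ℝ) + 2*(-α-1)))
            * (c^2/c^2) := by ring
        _ = 1 := by
            rw [e2, e3, div_self (by positivity : (c:ℝ)^2 ≠ 0)]; norm_num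
    have s1 : (θ k)^2 * (b k)^2 * ((θ j - θ k)^2)⁻¹
        ≤ (θ k)^2 * (b k)^2 * ((2^(2*α+2)/c^2) * (k:ℝ)^(2*α)) := by
      have := mul_le_mul_of_nonneg_left hinv (by positivity : (0:ℝ) ≤ (θ k)^2 * (b k)^2)
      rwa [hGinv] at this
    have s2 : (θ k)^2 * (b k)^2 * ((2^(2*α+2)/c^2) * (k:ℝ)^(2*α))
        ≤ (θ k)^2 * (C^2 * (k:ℝ)^(2*(-τ))) * ((2^(2*α+2)/c^2) * (k:ℝ)^(2*α)) := by
      apply mul_le_mul_of_nonneg_right (mul_le_mul_of_nonneg_left hbk (sq_nonneg _))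
      positivity
    have s3 : (k:ℝ)^(2*(-τ)) * (k:ℝ)^(2*α) ≤ 1 := by
      rw [← Real.rpow_add hk0]
      calc (k:ℝ)^(2*(-τ)+2*α) ≤ (k:ℝ)^(0:ℝ) :=
            Real.rpow_le_rpow_of_exponent_le hk1 (by linarith)
        _ = 1 := Real.rpow_zero _
    have s4 : (θ k)^2 * (C^2 * (k:ℝ)^(2*(-τ))) * ((2^(2*α+2)/c^2) * (k:ℝ)^(2*α))
        ≤ (θ k)^2 * (C^2 * 2^(2*α+2)/c^2) := by
      have e : (θ k)^2 * (C^2 * (k:ℝ)^(2*(-τ))) * ((2^(2*α+2)/c^2) * (k:ℝ)^(2*α))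
          = ((θ k)^2 * (C^2*2^(2*α+2)/c^2)) * ((k:ℝ)^(2*(-τ)) * (k:ℝ)^(2*α)) := by ring
      rw [e]
      calc ((θ k)^2 * (C^2*2^(2*α+2)/c^2)) * ((k:ℝ)^(2*(-τ)) * (k:ℝ)^(2*α))
          ≤ ((θ k)^2 * (C^2*2^(2*α+2)/c^2)) * 1 :=
            mul_le_mul_of_nonneg_left s3 (by positivity)
        _ = (θ k)^2 * (C^2 * 2^(2*α+2)/c^2) := by ring
    have s5 : (θ k)^2 * (C^2 * 2^(2*α+2)/c^2)
        ≤ D * ((C^2 * 2^(2*α+2) / c^2) * (α/c)^2 * (θ k)^2) := by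
      have h0 : (0:ℝ) ≤ (θ k)^2 * (C^2 * 2^(2*α+2)/c^2) := by positivity
      nlinarith [mul_le_mul_of_nonneg_left hlb1 h0]
    linarith [s1, s2, s4, s5, hA2nn, hA3nn]
  · rcases lt_or_ge k j with hB | hCD
    · -- Case B : j/2 < k < j
      have hgapB := theta_gap θ c α hα0 hgap hc k hk j (le_of_lt hB)
      have hjkR : (k:ℝ) < j := by exact_mod_cast hB
      have hG0 : (0:ℝ) < c * ((j:ℝ) - k) * (j:ℝ)^(-α-1) := by
        apply mul_pos (mul_pos hc (by linarith)) (Real.rpow_pos_of_pos hj0 _)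
      have hinv := inv_step _ hG0 (Or.inl hgapB)
      have hG2 : (c * ((j:ℝ)-k) * (j:ℝ)^(-α-1))^2
          = c^2 * ((j:ℝ)-k)^2 * (j:ℝ)^(2*(-α-1)) := by
        rw [mul_pow, mul_pow, sq_rpow' _ hj0.le]
      have hGinv : ((c * ((j:ℝ)-k) * (j:ℝ)^(-α-1))^2)⁻¹
          = (((j:ℝ)-k)^2)⁻¹ * ((j:ℝ)^(2*α+2) / c^2) := by
        apply inv_eq_of_mul_eq_one_left
        rw [hG2]
        have e3 : (j:ℝ)^(2*α+2) * (j:ℝ)^(2*(-α-1)) = 1 := by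
          rw [← Real.rpow_add hj0, show 2*α+2 + 2*(-α-1) = (0:ℝ) by ring, Real.rpow_zero]
        calc (((j:ℝ)-k)^2)⁻¹ * ((j:ℝ)^(2*α+2)/c^2) * (c^2 * ((j:ℝ)-k)^2 * (j:ℝ)^(2*(-α-1)))
            = ((((j:ℝ)-k)^2)⁻¹ * ((j:ℝ)-k)^2) * ((j:ℝ)^(2*α+2) * (j:ℝ)^(2*(-α-1)))
              * (c^2/c^2) := by ring
          _ = 1 := by
              rw [inv_mul_cancel₀ (pow_ne_zero 2 (ne_of_gt (by linarith : (0:ℝ) < (j:ℝ)-k))), e3,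
                div_self (by positivity : (c:ℝ)^2 ≠ 0)]; norm_num
      have hθkT : θ k^2 ≤ 2*T*(j:ℝ)⁻¹ := by
        have h1 := hT k hk
        have h2 : (j:ℝ) ≤ 2*k := by exact_mod_cast (le_of_lt hAB)
        have h3 : θ k^2 * (j:ℝ) ≤ 2*T := by nlinarith [sq_nonneg (θ k)]
        have h4 := (le_div_iff₀ hj0).mpr h3
        rwa [div_eq_mul_inv] at h4
      have hbkB : (b k)^2 ≤ C^2 * (2^(2*α+1) * (j:ℝ)^(-(2*α+1))) := by
        have h1 : (k:ℝ)^(2*(-τ)) ≤ (k:ℝ)^(-(2*α+1)) :=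
          Real.rpow_le_rpow_of_exponent_le hk1 (by linarith)
        have h2 : (k:ℝ)^(-(2*α+1)) ≤ ((j:ℝ)/2)^(-(2*α+1)) := by
          apply Real.rpow_le_rpow_of_nonpos (by positivity)
          · have : (j:ℝ) ≤ 2*k := by exact_mod_cast (le_of_lt hAB)
            linarith
          · linarith
        have h3 : ((j:ℝ)/2)^(-(2*α+1)) = (j:ℝ)^(-(2*α+1)) / (2:ℝ)^(-(2*α+1)) :=
          Real.div_rpow hj0.le (by norm_num) _
        have h4 : ((2:ℝ))^(-(2*α+1)) = ((2:ℝ)^(2*α+1))⁻¹ := Real.rpow_neg (by norm_num) _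
        have h5 : ((j:ℝ)/2)^(-(2*α+1)) = (j:ℝ)^(-(2*α+1)) * 2^(2*α+1) := by
          rw [h3, h4, div_eq_mul_inv, inv_inv]
        have h6 : (k:ℝ)^(2*(-τ)) ≤ (j:ℝ)^(-(2*α+1)) * 2^(2*α+1) := by
          rw [← h5]; exact le_trans h1 h2
        calc (b k)^2 ≤ C^2 * (k:ℝ)^(2*(-τ)) := hbk
          _ ≤ C^2 * ((j:ℝ)^(-(2*α+1)) * 2^(2*α+1)) :=
              mul_le_mul_of_nonneg_left h6 (sq_nonneg C)
          _ = C^2 * (2^(2*α+1) * (j:ℝ)^(-(2*α+1))) := by ring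
      have s1 : (θ k)^2 * (b k)^2 * ((θ j - θ k)^2)⁻¹
          ≤ (θ k)^2 * (b k)^2 * ((((j:ℝ)-k)^2)⁻¹ * ((j:ℝ)^(2*α+2)/c^2)) := by
        have := mul_le_mul_of_nonneg_left hinv (by positivity : (0:ℝ) ≤ (θ k)^2 * (b k)^2)
        rwa [hGinv] at this
      have s2 : (θ k)^2 * (b k)^2 * ((((j:ℝ)-k)^2)⁻¹ * ((j:ℝ)^(2*α+2)/c^2))
          ≤ (2*T*(j:ℝ)⁻¹) * (C^2 * (2^(2*α+1) * (j:ℝ)^(-(2*α+1))))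
            * ((((j:ℝ)-k)^2)⁻¹ * ((j:ℝ)^(2*α+2)/c^2)) := by
        apply mul_le_mul_of_nonneg_right _ (by positivity)
        exact mul_le_mul hθkT hbkB (sq_nonneg _) (by positivity)
      have s3 : (2*T*(j:ℝ)⁻¹) * (C^2 * (2^(2*α+1) * (j:ℝ)^(-(2*α+1))))
            * ((((j:ℝ)-k)^2)⁻¹ * ((j:ℝ)^(2*α+2)/c^2))
          = (T * C^2 * (2*2^(2*α+1)) / c^2) * (((j:ℝ)-k)^2)⁻¹ *
            ((j:ℝ)^(-1:ℝ) * ((j:ℝ)^(-(2*α+1)) * (j:ℝ)^(2*α+2))) := by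
        rw [Real.rpow_neg_one]; ring
      have s4 : (j:ℝ)^(-1:ℝ) * ((j:ℝ)^(-(2*α+1)) * (j:ℝ)^(2*α+2)) = 1 := by
        rw [← Real.rpow_add hj0, ← Real.rpow_add hj0,
          show (-1:ℝ) + (-(2*α+1) + (2*α+2)) = 0 by ring, Real.rpow_zero]
      have s5 : (2:ℝ)*2^(2*α+1) = 2^(2*α+2) := by
        have h := Real.rpow_add two_pos 1 (2*α+1)
        rw [Real.rpow_one] at h
        rw [show (2*α+2 : ℝ) = 1 + (2*α+1) from by ring, h]
      have s6 : (θ k)^2 * (b k)^2 * ((θ j - θ k)^2)⁻¹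
          ≤ (T * C^2 * 2^(2*α+2) / c^2) * (((j:ℝ)-k)^2)⁻¹ := by
        rw [s3, s4, mul_one, s5] at s2
        linarith [s1, s2]
      have h0 : 0 ≤ (T * C^2 * 2^(2*α+2) / c^2) * (((j:ℝ)-k)^2)⁻¹ :=
        mul_nonneg (div_nonneg (mul_nonneg (mul_nonneg hT0 (by positivity)) h2pow.le)
          (by positivity)) i1
      have s7 : (T * C^2 * 2^(2*α+2)/c^2) * (((j:ℝ)-k)^2)⁻¹
          ≤ D * (((T * C^2 * 2^(2*α+2) / c^2) * (α/c)^2 + 2*C^2/c^2) * (((j:ℝ) - k)^2)⁻¹) := by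
        have t2 := le_mul_of_one_le_right h0 hlb1
        have t3 : (T * C^2 * 2^(2*α+2)/c^2) * (((j:ℝ)-k)^2)⁻¹ * ((α/c)^2*D)
            = D * (((T * C^2 * 2^(2*α+2) / c^2) * (α/c)^2) * (((j:ℝ) - k)^2)⁻¹) := by ring
        have t4 : 0 ≤ D * ((2*C^2/c^2) * (((j:ℝ) - k)^2)⁻¹) :=
          mul_nonneg hD0.le (mul_nonneg (by positivity) i1)
        rw [t3] at t2
        linarith
      linarith [s6, s7, hA1nn, hA3nn]
    · -- now j < k
      have hjk : j < k := lt_of_le_of_ne hCD (Ne.symm hkj)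
      have hjkR : (j:ℝ) < k := by exact_mod_cast hjk
      have hθkj : (θ k)^2 ≤ (θ j)^2 := by
        have := theta_mono θ hstrict j hj k (le_of_lt hjk)
        nlinarith [hpos k hk, hpos j hj]
      rcases lt_or_ge k (2*j) with hCkj | hD2
      · -- Case C : j < k < 2j
        have hgapC := theta_gap θ c α hα0 hgap hc j hj k (le_of_lt hjk)
        have hG0 : (0:ℝ) < c * ((k:ℝ) - j) * (k:ℝ)^(-α-1) := by
          apply mul_pos (mul_pos hc (by linarith)) (Real.rpow_pos_of_pos hk0 _)
        have hinv := inv_step _ hG0 (Or.inr hgapC)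
        have hG2 : (c * ((k:ℝ)-j) * (k:ℝ)^(-α-1))^2
            = c^2 * ((k:ℝ)-j)^2 * (k:ℝ)^(2*(-α-1)) := by
          rw [mul_pow, mul_pow, sq_rpow' _ hk0.le]
        have hGinv : ((c * ((k:ℝ)-j) * (k:ℝ)^(-α-1))^2)⁻¹
            = (((k:ℝ)-j)^2)⁻¹ * ((k:ℝ)^(2*α+2) / c^2) := by
          apply inv_eq_of_mul_eq_one_left
          rw [hG2]
          have e3 : (k:ℝ)^(2*α+2) * (k:ℝ)^(2*(-α-1)) = 1 := by
            rw [← Real.rpow_add hk0, show 2*α+2 + 2*(-α-1) = (0:ℝ) by ring, Real.rpow_zero]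
          calc (((k:ℝ)-j)^2)⁻¹ * ((k:ℝ)^(2*α+2)/c^2) * (c^2 * ((k:ℝ)-j)^2 * (k:ℝ)^(2*(-α-1)))
              = ((((k:ℝ)-j)^2)⁻¹ * ((k:ℝ)-j)^2) * ((k:ℝ)^(2*α+2) * (k:ℝ)^(2*(-α-1)))
                * (c^2/c^2) := by ring
            _ = 1 := by
                rw [inv_mul_cancel₀ (pow_ne_zero 2 (ne_of_gt (by linarith : (0:ℝ) < (k:ℝ)-j))), e3,
                  div_self (by positivity : (c:ℝ)^2 ≠ 0)]; norm_num
        have s1 : (θ k)^2 * (b k)^2 * ((θ j - θ k)^2)⁻¹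
            ≤ (θ k)^2 * (b k)^2 * ((((k:ℝ)-j)^2)⁻¹ * ((k:ℝ)^(2*α+2)/c^2)) := by
          have := mul_le_mul_of_nonneg_left hinv (by positivity : (0:ℝ) ≤ (θ k)^2 * (b k)^2)
          rwa [hGinv] at this
        have s2 : (θ k)^2 * (b k)^2 * ((((k:ℝ)-j)^2)⁻¹ * ((k:ℝ)^(2*α+2)/c^2))
            ≤ (θ j)^2 * (C^2 * (k:ℝ)^(2*(-τ))) * ((((k:ℝ)-j)^2)⁻¹ * ((k:ℝ)^(2*α+2)/c^2)) := by
          apply mul_le_mul_of_nonneg_right _ (by positivity)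
          exact mul_le_mul hθkj hbk (sq_nonneg _) (sq_nonneg _)
        have s3 : (k:ℝ)^(2*(-τ)) * (k:ℝ)^(2*α+2) ≤ 2*(j:ℝ) := by
          calc (k:ℝ)^(2*(-τ)) * (k:ℝ)^(2*α+2) = (k:ℝ)^(2*(-τ)+(2*α+2)) :=
                (Real.rpow_add hk0 _ _).symm
            _ ≤ (k:ℝ)^(1:ℝ) := Real.rpow_le_rpow_of_exponent_le hk1 (by linarith)
            _ = (k:ℝ) := Real.rpow_one _
            _ ≤ 2*(j:ℝ) := by exact_mod_cast le_of_lt hCkj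
        have s4 : (j:ℝ) ≤ (j:ℝ)^(2*α) := by
          have h := Real.rpow_le_rpow_of_exponent_le (by exact_mod_cast hj : (1:ℝ) ≤ j)
            (by linarith : (1:ℝ) ≤ 2*α)
          rwa [Real.rpow_one] at h
        have e : (θ j)^2 * (C^2 * (k:ℝ)^(2*(-τ))) * ((((k:ℝ)-j)^2)⁻¹ * ((k:ℝ)^(2*α+2)/c^2))
            = ((θ j)^2 * (C^2/c^2) * (((k:ℝ)-j)^2)⁻¹) * ((k:ℝ)^(2*(-τ)) * (k:ℝ)^(2*α+2)) := by
          ring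
        have i1' : (0:ℝ) ≤ (((k:ℝ)-j)^2)⁻¹ := by positivity
        have s5 : ((θ j)^2 * (C^2/c^2) * (((k:ℝ)-j)^2)⁻¹) * ((k:ℝ)^(2*(-τ)) * (k:ℝ)^(2*α+2))
            ≤ ((θ j)^2 * (C^2/c^2) * (((k:ℝ)-j)^2)⁻¹) * (2*(j:ℝ)) :=
          mul_le_mul_of_nonneg_left s3 (by positivity)
        have s6 : ((θ j)^2 * (C^2/c^2) * (((k:ℝ)-j)^2)⁻¹) * (2*(j:ℝ))
            ≤ D * ((2*C^2/c^2) * (((j:ℝ)-k)^2)⁻¹) := by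
          have eu : ((j:ℝ)-k)^2 = ((k:ℝ)-j)^2 := by ring
          rw [hD, eu]
          have h := mul_le_mul_of_nonneg_left s4
            (by positivity : (0:ℝ) ≤ 2 * ((θ j)^2 * (C^2/c^2) * (((k:ℝ)-j)^2)⁻¹))
          calc ((θ j)^2 * (C^2/c^2) * (((k:ℝ)-j)^2)⁻¹) * (2*(j:ℝ))
              = (2 * ((θ j)^2 * (C^2/c^2) * (((k:ℝ)-j)^2)⁻¹)) * (j:ℝ) := by ring
            _ ≤ (2 * ((θ j)^2 * (C^2/c^2) * (((k:ℝ)-j)^2)⁻¹)) * (j:ℝ)^(2*α) := h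
            _ = (θ j)^2 * (j:ℝ)^(2*α) * ((2*C^2/c^2) * (((k:ℝ)-j)^2)⁻¹) := by ring
        have hXnn : 0 ≤ D * ((T * C^2 * 2^(2*α+2) / c^2) * (α/c)^2 * (((j:ℝ) - k)^2)⁻¹) := by
          apply mul_nonneg hD0.le
          apply mul_nonneg (mul_nonneg (div_nonneg (mul_nonneg (mul_nonneg hT0
            (by positivity)) h2pow.le) (by positivity)) (sq_nonneg _)) i1
        have final : (θ k)^2 * (b k)^2 * ((θ j - θ k)^2)⁻¹
            ≤ D * ((2*C^2/c^2) * (((j:ℝ)-k)^2)⁻¹) := by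
          rw [e] at s2
          linarith [s1, s2, s5, s6]
        linarith [final, hA1nn, hA3nn, hXnn]
      · -- Case D : k ≥ 2j
        have hgapD := theta_gap θ c α hα0 hgap hc j hj (2*j) (by omega)
        have hmonoD := theta_mono θ hstrict (2*j) (by omega) k hD2
        have hc2j : ((2*j:ℕ):ℝ) = 2*(j:ℝ) := by push_cast; ring
        rw [hc2j] at hgapD
        have hG0 : (0:ℝ) < c * (j:ℝ) * (2*(j:ℝ))^(-α-1) := by positivity
        have hG : c * (j:ℝ) * (2*(j:ℝ))^(-α-1) ≤ θ j - θ k := by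
          have e : c * (2*(j:ℝ) - j) * (2*(j:ℝ))^(-α-1) = c * (j:ℝ) * (2*(j:ℝ))^(-α-1) := by
            ring
          rw [e] at hgapD
          linarith [hmonoD]
        have hinv := inv_step _ hG0 (Or.inr hG)
        have hG2 : (c * (j:ℝ) * (2*(j:ℝ))^(-α-1))^2
            = c^2 * 2^(2*(-α-1)) * (j:ℝ)^(((2:ℕ):ℝ) + 2*(-α-1)) := by
          calc (c * (j:ℝ) * (2*(j:ℝ))^(-α-1))^2
              = c^2 * ((j:ℝ)^(2:ℕ) * ((2*(j:ℝ))^(-α-1))^2) := by ring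
            _ = c^2 * ((j:ℝ)^(2:ℕ) * (2*(j:ℝ))^(2*(-α-1))) := by
                rw [sq_rpow' _ (by positivity)]
            _ = c^2 * ((j:ℝ)^(2:ℕ) * ((2:ℝ)^(2*(-α-1)) * (j:ℝ)^(2*(-α-1)))) := by
                rw [Real.mul_rpow (by norm_num) hj0.le]
            _ = c^2 * 2^(2*(-α-1)) * ((j:ℝ)^(((2:ℕ)):ℝ) * (j:ℝ)^(2*(-α-1))) := by
                rw [Real.rpow_natCast]; ring
            _ = c^2 * 2^(2*(-α-1)) * (j:ℝ)^(((2:ℕ):ℝ) + 2*(-α-1)) := by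
                rw [← Real.rpow_add hj0]
        have hGinv : ((c * (j:ℝ) * (2*(j:ℝ))^(-α-1))^2)⁻¹
            = (2^(2*α+2)/c^2) * (j:ℝ)^(2*α) := by
          apply inv_eq_of_mul_eq_one_left
          rw [hG2]
          have e2 : (2:ℝ)^(2*α+2) * 2^(2*(-α-1)) = 1 := by
            rw [← Real.rpow_add two_pos, show 2*α+2 + 2*(-α-1) = (0:ℝ) by ring, Real.rpow_zero]
          have e3 : (j:ℝ)^(2*α) * (j:ℝ)^(((2:ℕ):ℝ) + 2*(-α-1)) = 1 := by
            rw [← Real.rpow_add hj0, show 2*α + (((2:ℕ):ℝ) + 2*(-α-1)) = (0:ℝ) by push_cast; ring,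
              Real.rpow_zero]
          calc (2^(2*α+2)/c^2) * (j:ℝ)^(2*α) * (c^2 * 2^(2*(-α-1)) * (j:ℝ)^(((2:ℕ):ℝ) + 2*(-α-1)))
              = ((2:ℝ)^(2*α+2) * 2^(2*(-α-1))) * ((j:ℝ)^(2*α) * (j:ℝ)^(((2:ℕ):ℝ) + 2*(-α-1)))
                * (c^2/c^2) := by ring
            _ = 1 := by
                rw [e2, e3, div_self (by positivity : (c:ℝ)^2 ≠ 0)]; norm_num
        have hbkD : (b k)^2 ≤ C^2 * ((k:ℝ)^2)⁻¹ := by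
          have h1 : (k:ℝ)^(2*(-τ)) ≤ (k:ℝ)^(-((2:ℕ):ℝ)) :=
            Real.rpow_le_rpow_of_exponent_le hk1 (by push_cast; linarith)
          have h2 : (k:ℝ)^(-((2:ℕ):ℝ)) = ((k:ℝ)^2)⁻¹ := by
            rw [Real.rpow_neg hk0.le, Real.rpow_natCast]
          calc (b k)^2 ≤ C^2 * (k:ℝ)^(2*(-τ)) := hbk
            _ ≤ C^2 * ((k:ℝ)^2)⁻¹ := by
                rw [← h2]; exact mul_le_mul_of_nonneg_left h1 (sq_nonneg C)
        have s1 : (θ k)^2 * (b k)^2 * ((θ j - θ k)^2)⁻¹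
            ≤ (θ k)^2 * (b k)^2 * ((2^(2*α+2)/c^2) * (j:ℝ)^(2*α)) := by
          have := mul_le_mul_of_nonneg_left hinv (by positivity : (0:ℝ) ≤ (θ k)^2 * (b k)^2)
          rwa [hGinv] at this
        have s2 : (θ k)^2 * (b k)^2 * ((2^(2*α+2)/c^2) * (j:ℝ)^(2*α))
            ≤ (θ j)^2 * (C^2 * ((k:ℝ)^2)⁻¹) * ((2^(2*α+2)/c^2) * (j:ℝ)^(2*α)) := by
          apply mul_le_mul_of_nonneg_right _ (by positivity)
          exact mul_le_mul hθkj hbkD (sq_nonneg _) (sq_nonneg _)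
        have e : (θ j)^2 * (C^2 * ((k:ℝ)^2)⁻¹) * ((2^(2*α+2)/c^2) * (j:ℝ)^(2*α))
            = D * ((C^2 * 2^(2*α+2) / c^2) * (((k:ℝ))^2)⁻¹) := by
          rw [hD]; ring
        rw [e] at s2
        linarith [s1, s2, hA1nn, hA2nn]

/-- Under the eigengap condition (with square-summable eigenvalues) and the
coefficient decay `|b j| ≤ C j^{−τ}` with `τ ≥ α + 1/2`, the quantity
`sup_{j≥1} (θ_j² j^{2α})^{−1} Σ_{k≠j} θ_k² b_k² (θ_j − θ_k)^{−2}` is finite: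
there is a uniform constant `B` bounding each normalized sum. -/
theorem stmt_6 (θ b : ℕ → ℝ) (c C α τ : ℝ) (hc : 0 < c) (hC : 0 < C)
    (hα : 1 < α) (hτ : α + 1 / 2 ≤ τ)
    (hpos : ∀ j : ℕ, 1 ≤ j → 0 < θ j)
    (hstrict : ∀ j : ℕ, 1 ≤ j → θ (j + 1) < θ j)
    (hgap : ∀ j : ℕ, 1 ≤ j → c * (j : ℝ) ^ (-α - 1) ≤ θ j - θ (j + 1))
    (hsq : Summable fun k => (θ k) ^ 2)
    (hθlb : ∀ j : ℕ, 1 ≤ j → (c / α) * (j : ℝ) ^ (-α) ≤ θ j)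
    (hb : ∀ j : ℕ, 1 ≤ j → |b j| ≤ C * (j : ℝ) ^ (-τ)) :
    ∃ B : ℝ, ∀ j : ℕ, 1 ≤ j →
      (∑' k : ℕ, if 1 ≤ k ∧ k ≠ j then
          (θ k) ^ 2 * (b k) ^ 2 * ((θ j - θ k) ^ 2)⁻¹ else 0)
        ≤ B * ((θ j) ^ 2 * (j : ℝ) ^ (2 * α)) := by
  have hα0 : (0:ℝ) < α := by linarith
  set T := ∑' k : ℕ, (θ k)^2 with hTdef
  have hT0 : 0 ≤ T := tsum_nonneg (fun k => sq_nonneg _)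
  have hTk : ∀ k : ℕ, 1 ≤ k → (k:ℝ) * θ k ^ 2 ≤ T :=
    fun k hk => theta_sq_bd θ hpos hstrict hsq k hk
  set M1 := (C^2 * 2^(2*α+2) / c^2) * (α/c)^2 with hM1d
  set M2 := (T * C^2 * 2^(2*α+2) / c^2) * (α/c)^2 + 2*C^2/c^2 with hM2d
  set M3 := C^2 * 2^(2*α+2) / c^2 with hM3d
  have h2pow : (0:ℝ) < 2^(2*α+2) := Real.rpow_pos_of_pos two_pos _
  have hM1nn : 0 ≤ M1 := by rw [hM1d]; positivity
  have hM3nn : 0 ≤ M3 := by rw [hM3d]; positivity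
  have hM2nn : 0 ≤ M2 := by
    rw [hM2d]
    have h1 : 0 ≤ T * C^2 * 2^(2*α+2) / c^2 :=
      div_nonneg (mul_nonneg (mul_nonneg hT0 (by positivity)) h2pow.le) (by positivity)
    have h2 : 0 ≤ (2:ℝ)*C^2/c^2 := by positivity
    exact add_nonneg (mul_nonneg h1 (sq_nonneg _)) h2
  refine ⟨M1 * T + 4 * M2 + 4 * M3, ?_⟩
  intro j hj
  have hj0 : (0:ℝ) < j := by exact_mod_cast hj
  set R := (θ j)^2 * (j:ℝ)^(2*α) with hRd
  have hR0 : 0 ≤ R := by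
    rw [hRd]
    exact mul_nonneg (sq_nonneg _) (Real.rpow_nonneg hj0.le _)
  set H : ℕ → ℝ := fun k => M1 * (θ k)^2 + M2 * (((j:ℝ) - k)^2)⁻¹ + M3 * (((k:ℝ))^2)⁻¹
    with hHdef
  have hsum1 : Summable (fun k : ℕ => M1 * (θ k)^2) := hsq.mul_left M1
  have hsum2 : Summable (fun k : ℕ => M2 * (((j:ℝ) - k)^2)⁻¹) := (u_summable j).mul_left M2
  have hv : Summable (fun k : ℕ => (((k:ℝ))^2)⁻¹) :=
    (u_summable 0).congr (fun k => by push_cast; rw [zero_sub, neg_sq])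
  have hvt : ∑' k : ℕ, (((k:ℝ))^2)⁻¹ ≤ 4 := by
    have e : ∀ k : ℕ, ((((0:ℕ):ℝ) - k)^2)⁻¹ = (((k:ℝ))^2)⁻¹ :=
      fun k => by push_cast; rw [zero_sub, neg_sq]
    calc ∑' k : ℕ, (((k:ℝ))^2)⁻¹ = ∑' k : ℕ, ((((0:ℕ):ℝ) - k)^2)⁻¹ := (tsum_congr e).symm
      _ ≤ 4 := u_tsum 0
  have hsum3 : Summable (fun k : ℕ => M3 * (((k:ℝ))^2)⁻¹) := hv.mul_left M3
  have hHsum : Summable H := (hsum1.add hsum2).add hsum3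
  have hkey : ∀ k : ℕ, (if 1 ≤ k ∧ k ≠ j then (θ k)^2 * (b k)^2 * ((θ j - θ k)^2)⁻¹ else 0)
      ≤ R * H k :=
    fun k => key_bound θ b c C α τ hc hC hα hτ hpos hstrict hgap hθlb hb T hT0 hTk j k hj
  have hfnn : ∀ k : ℕ,
      0 ≤ (if 1 ≤ k ∧ k ≠ j then (θ k)^2 * (b k)^2 * ((θ j - θ k)^2)⁻¹ else 0) := by
    intro k
    split_ifs
    · positivity
    · exact le_refl 0
  have hRH : Summable (fun k => R * H k) := hHsum.mul_left R
  have step1 : (∑' k : ℕ, if 1 ≤ k ∧ k ≠ j then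
      (θ k)^2 * (b k)^2 * ((θ j - θ k)^2)⁻¹ else 0) ≤ ∑' k : ℕ, R * H k := by
    apply Real.tsum_le_of_sum_range_le hfnn
    intro n
    calc ∑ i ∈ Finset.range n,
          (if 1 ≤ i ∧ i ≠ j then (θ i)^2 * (b i)^2 * ((θ j - θ i)^2)⁻¹ else 0)
        ≤ ∑ i ∈ Finset.range n, R * H i := Finset.sum_le_sum (fun i _ => hkey i)
      _ ≤ ∑' k : ℕ, R * H k :=
          Summable.sum_le_tsum _ (fun i _ => le_trans (hfnn i) (hkey i)) hRH
  have e1 : ∑' k : ℕ, R * H k = R * ∑' k : ℕ, H k := tsum_mul_left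
  have e2 : ∑' k : ℕ, H k
      = M1 * T + M2 * (∑' k : ℕ, (((j:ℝ)-k)^2)⁻¹) + M3 * (∑' k : ℕ, (((k:ℝ))^2)⁻¹) := by
    rw [show (∑' k : ℕ, H k) = ∑' k : ℕ,
        ((fun k => M1 * (θ k)^2 + M2 * (((j:ℝ) - k)^2)⁻¹) k + M3 * (((k:ℝ))^2)⁻¹) from rfl]
    rw [Summable.tsum_add (hsum1.add hsum2) hsum3, Summable.tsum_add hsum1 hsum2,
      tsum_mul_left, tsum_mul_left, tsum_mul_left]
  have hHb : ∑' k : ℕ, H k ≤ M1 * T + 4 * M2 + 4 * M3 := by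
    rw [e2]
    have t1 := mul_le_mul_of_nonneg_left (u_tsum j) hM2nn
    have t2 := mul_le_mul_of_nonneg_left hvt hM3nn
    linarith
  calc (∑' k : ℕ, if 1 ≤ k ∧ k ≠ j then
        (θ k)^2 * (b k)^2 * ((θ j - θ k)^2)⁻¹ else 0)
      ≤ ∑' k : ℕ, R * H k := step1
    _ = R * ∑' k : ℕ, H k := e1
    _ ≤ R * (M1 * T + 4 * M2 + 4 * M3) := mul_le_mul_of_nonneg_left hHb hR0
    _ = (M1 * T + 4 * M2 + 4 * M3) * ((θ j)^2 * (j:ℝ)^(2*α)) := by rw [hRd]; ring
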